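/- arXiv:1207.4044 — 11 statements merged into one kernel-verified Lean document; each statement's English description precedes it below -/
import Mathlib

section
/- In the n-user flow control game with server capacity μ > 0 and type profile t with t_i > 0 for all i, the manager's utility U_0(d) = (μ − Σ_{j=1}^n d_j) · Π_{i=1}^n d_i^{t_i/n} over rate profiles d ∈ [0,μ]^n with Σ_{j=1}^n d_j ≤ μ attains its maximum at the unique profile d*(t) given by d*_i(t) = t_i μ / (n + Σ_{k=1}^n t_k). -/
/-!
Weighted AM-GM: if `a i > 0` and `A = ∑ a i`, then the numbers `y i * A / a i` have weighted mean
`∑ y i` for the weights `a i / A`, so `∏ y i ^ a i ≤ ∏ (a i * ∑ y / A) ^ a i`, strictly unless `y`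
is proportional to `a`. The manager's utility is such a product over the users together with the
spare capacity `μ - ∑ d j` (exponent `1`), whose total is always `μ`; with `a i = t i / n` the
proportional profile is `d*`.
-/

open Finset Real

theorem prod_rpow_lt_prod_rpow_of_ne_proportional {ι : Type*} [Fintype ι] {a y : ι → ℝ}
    (ha : ∀ i, 0 < a i) (hy : ∀ i, 0 ≤ y i)
    (hne : ∃ j, y j ≠ a j * (∑ i, y i) / ∑ i, a i) :
    ∏ i, y i ^ a i < ∏ i, (a i * (∑ i, y i) / ∑ i, a i) ^ a i := by
  set A := ∑ i, a i
  set T := ∑ i, y i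
  obtain ⟨j, hj⟩ := hne
  have hA : 0 < A := sum_pos (fun i _ => ha i) ⟨j, mem_univ j⟩
  set w : ι → ℝ := fun i => a i / A
  set z : ι → ℝ := fun i => y i * A / a i
  have hw : ∀ i, 0 < w i := fun i => div_pos (ha i) hA
  have hw1 : ∑ i, w i = 1 := by rw [← sum_div, div_self hA.ne']
  have hwz : ∀ i, w i * z i = y i := fun i => by
    simp only [w, z]; field_simp [(ha i).ne', hA.ne']
  have hz : ∀ i, 0 ≤ z i := fun i => by positivity [hy i, ha i]
  have hamgm : ∏ i, z i ^ w i < T := by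
    have := (geom_mean_lt_arith_mean_weighted_iff_of_pos' univ w z
      (fun i _ => hw i) hw1 (fun i _ => hz i)).2
    simp only [hwz] at this
    refine this ⟨j, mem_univ j, fun h => hj ?_⟩
    simp only [z] at h
    field_simp [(ha j).ne'] at h ⊢
    linarith
  have hfactor : ∀ x : ι → ℝ, (∀ i, 0 ≤ x i) →
      ∏ i, (w i * x i) ^ a i = (∏ i, x i ^ w i) ^ A * ∏ i, w i ^ a i := fun x hx => by
    rw [← finsetProd_rpow _ _ (fun i _ => rpow_nonneg (hx i) _), ← prod_mul_distrib]
    refine prod_congr rfl fun i _ => ?_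
    rw [mul_rpow (hw i).le (hx i), ← rpow_mul (hx i), div_mul_cancel₀ _ hA.ne', mul_comm]
  have hT : 0 ≤ T := sum_nonneg fun i _ => hy i
  calc ∏ i, y i ^ a i = (∏ i, z i ^ w i) ^ A * ∏ i, w i ^ a i := by
        simp only [← hfactor z hz, hwz]
    _ < (∏ i, T ^ w i) ^ A * ∏ i, w i ^ a i := by
        rw [← rpow_sum_of_nonneg hT (fun i _ => (hw i).le), hw1, rpow_one]
        gcongr
        · exact prod_pos fun i _ => rpow_pos_of_pos (hw i) _
        · exact prod_nonneg fun i _ => rpow_nonneg (hz i) _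
    _ = ∏ i, (a i * T / A) ^ a i := by
        simp only [← hfactor _ fun _ => hT, w, mul_div_right_comm]

theorem sub_sum_mul_prod_rpow_lt {ι : Type*} [Fintype ι] {b d : ι → ℝ} {μ : ℝ}
    (hb : ∀ i, 0 < b i) (hd : ∀ i, 0 ≤ d i) (hdμ : ∑ i, d i ≤ μ)
    (hne : d ≠ fun i => b i * μ / (1 + ∑ i, b i)) :
    (μ - ∑ i, d i) * ∏ i, d i ^ b i <
      μ / (1 + ∑ i, b i) * ∏ i, (b i * μ / (1 + ∑ i, b i)) ^ b i := by
  obtain ⟨j, hj⟩ := Function.ne_iff.1 hne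
  have := prod_rpow_lt_prod_rpow_of_ne_proportional (ι := Option ι)
    (a := (Option.elim · 1 b)) (y := (Option.elim · (μ - ∑ i, d i) d))
    (Option.rec one_pos hb) (Option.rec (sub_nonneg.2 hdμ) hd) ⟨some j, by simpa⟩
  simpa [Fintype.prod_option, Fintype.sum_option] using this

theorem stmt_0_general (n : ℕ) (μ : ℝ) (hμ : 0 < μ)
    (t : Fin n → ℝ) (ht : ∀ i, 0 < t i)
    (dstar : Fin n → ℝ)
    (hdstar : ∀ i, dstar i = t i * μ / ((n : ℝ) + ∑ k, t k)) :
    (∀ i, dstar i ∈ Set.Icc (0 : ℝ) μ) ∧ (∑ j, dstar j) ≤ μ ∧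
    ∀ d : Fin n → ℝ, (∀ i, d i ∈ Set.Icc (0 : ℝ) μ) → (∑ j, d j) ≤ μ → d ≠ dstar →
      (μ - ∑ j, d j) * ∏ i, d i ^ (t i / (n : ℝ)) <
        (μ - ∑ j, dstar j) * ∏ i, dstar i ^ (t i / (n : ℝ)) := by
  have ht_sum : 0 ≤ ∑ k, t k := sum_nonneg fun k _ => (ht k).le
  have hdstar_nonneg : ∀ i, 0 ≤ dstar i := fun i => by
    rw [hdstar]; have := ht i; positivity
  have hsum_le : ∑ j, dstar j ≤ μ := calc
    ∑ j, dstar j = (∑ k, t k) / ((n : ℝ) + ∑ k, t k) * μ := by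
      simp only [hdstar, ← sum_div, ← sum_mul, div_mul_eq_mul_div]
    _ ≤ 1 * μ := by gcongr; exact div_le_one_of_le₀ (by linarith) (by positivity)
    _ = μ := one_mul μ
  refine ⟨fun i => ⟨hdstar_nonneg i,
    (single_le_sum (fun j _ => hdstar_nonneg j) (mem_univ i)).trans hsum_le⟩,
    hsum_le, fun d hd hdμ hne => ?_⟩
  obtain ⟨i₀, -⟩ := Function.ne_iff.1 hne
  have hn : (0 : ℝ) < n := Nat.cast_pos.2 i₀.pos
  have hdstar' : dstar = fun i => t i / n * μ / (1 + ∑ k, t k / n) := funext fun i => by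
    rw [hdstar, ← sum_div]; field_simp
  have hslack : μ - ∑ j, dstar j = μ / (1 + ∑ k, t k / n) := by
    simp only [hdstar, ← sum_div, ← sum_mul]; field_simp; ring
  rw [hslack, hdstar']
  exact sub_sum_mul_prod_rpow_lt (fun i => div_pos (ht i) hn) (fun i => (hd i).1) hdμ
    (hdstar' ▸ hne)

/-- In the n-user flow control game with server capacity μ > 0 and type profile t with
t_i > 0 for all i, the manager's utility U_0(d) = (μ − Σ d_j) · Π d_i^(t_i/n) over rate
profiles d ∈ [0,μ]^n with Σ d_j ≤ μ attains its maximum at the unique profile d*(t)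
given by d*_i(t) = t_i μ / (n + Σ_k t_k). -/
theorem stmt_0 (n : ℕ) (hn : 1 ≤ n) (μ : ℝ) (hμ : 0 < μ)
    (t : Fin n → ℝ) (ht : ∀ i, 0 < t i)
    (dstar : Fin n → ℝ)
    (hdstar : ∀ i, dstar i = t i * μ / ((n : ℝ) + ∑ k, t k)) :
    (∀ i, dstar i ∈ Set.Icc (0 : ℝ) μ) ∧ (∑ j, dstar j) ≤ μ ∧
    ∀ d : Fin n → ℝ, (∀ i, d i ∈ Set.Icc (0 : ℝ) μ) → (∑ j, d j) ≤ μ → d ≠ dstar →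
      (μ - ∑ j, d j) * ∏ i, d i ^ (t i / (n : ℝ)) <
        (μ - ∑ j, dstar j) * ∏ i, dstar i ^ (t i / (n : ℝ)) :=
  stmt_0_general n μ hμ t ht dstar hdstar
end

section
/- In the n-user flow control game with server capacity μ > 0 and types t_i > 0, the profile d^{NE}(t) given by d^{NE}_i(t) = t_i μ / (1 + Σ_{k=1}^n t_k) is a Nash equilibrium: for each i, d^{NE}_i(t) maximizes x ↦ x^{t_i}(μ − x − Σ_{j≠i} d^{NE}_j(t)) over x ∈ [0, μ]. Moreover it is the unique Nash equilibrium: any profile d ∈ [0,μ]^n such that for each i, d_i maximizes x ↦ x^{t_i}(μ − x − Σ_{j≠i} d_j) over [0, μ] equals d^{NE}(t). -/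
/-!
Facing a residual capacity `c > 0`, a user's payoff `x ↦ x ^ t * (c - x)` has the unique maximiser
`m = t c / (1 + t)` on `[0, ∞)`: writing `x = m s`, the payoff is `m ^ t (m / t) · s ^ t (1 + t (1 - s))`,
and `s ^ t (1 + t (1 - s)) ≤ s ^ t exp (-t log s) = 1` because `log s ≤ s - 1`, strictly for `s ≠ 1`.
So at an equilibrium `d` every `d i = t i * (μ - ∑ d)₊`; the positive part cannot be zero, as that
would force `d = 0` and `∑ d = 0 < μ`, and summing gives `μ - ∑ d = μ / (1 + ∑ t)`.
-/

open Finset Set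

namespace Real

theorem rpow_mul_one_add_mul_one_sub_lt_one {s t : ℝ} (hs : 0 < s) (hs1 : s ≠ 1) (ht : 0 < t) :
    s ^ t * (1 + t * (1 - s)) < 1 := by
  have hexp : 1 + t * (1 - s) < exp (-(t * log s)) := calc
    1 + t * (1 - s) < -(t * log s) + 1 := by nlinarith [log_lt_sub_one_of_pos hs hs1]
    _ ≤ exp (-(t * log s)) := add_one_le_exp _
  calc s ^ t * (1 + t * (1 - s)) < s ^ t * exp (-(t * log s)) :=
        mul_lt_mul_of_pos_left hexp (rpow_pos_of_pos hs t)
    _ = 1 := by rw [rpow_def_of_pos hs, ← exp_add, mul_comm t, add_neg_cancel, exp_zero]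

theorem rpow_mul_sub_lt_of_ne {t c x : ℝ} (ht : 0 < t) (hc : 0 < c) (hx : 0 ≤ x)
    (hne : x ≠ t * c / (1 + t)) :
    x ^ t * (c - x) < (t * c / (1 + t)) ^ t * (c - t * c / (1 + t)) := by
  set m := t * c / (1 + t) with hm_def
  have hm : 0 < m := by positivity
  have hcm : c = m + m / t := by rw [hm_def]; field_simp; ring
  rcases hx.eq_or_lt with rfl | hx
  · rw [zero_rpow ht.ne', zero_mul, hcm, add_sub_cancel_left]
    positivity
  set s := x / m
  have hxs : x = m * s := by simp only [s]; field_simp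
  have hs1 : s ≠ 1 := fun h => hne (by rw [hxs, h, mul_one])
  calc x ^ t * (c - x) = m ^ t * (m / t) * (s ^ t * (1 + t * (1 - s))) := by
        rw [hxs, mul_rpow hm.le (by positivity), hcm]
        field_simp
        ring
    _ < m ^ t * (m / t) * 1 :=
        mul_lt_mul_of_pos_left (rpow_mul_one_add_mul_one_sub_lt_one (by positivity) hs1 ht)
          (by positivity)
    _ = m ^ t * (c - m) := by rw [mul_one, hcm, add_sub_cancel_left]

theorem isMaxOn_rpow_mul_sub {t c : ℝ} (ht : 0 < t) (hc : 0 < c) :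
    IsMaxOn (fun x => x ^ t * (c - x)) (Ici 0) (t * c / (1 + t)) := by
  refine isMaxOn_iff.2 fun x hx => ?_
  rcases eq_or_ne x (t * c / (1 + t)) with rfl | hne
  · exact le_rfl
  · exact (rpow_mul_sub_lt_of_ne ht hc hx hne).le

theorem eq_mul_max_sub_of_isMaxOn {t c μ y : ℝ} (ht : 0 < t) (hcμ : c ≤ μ) (hy : y ∈ Icc 0 μ)
    (hmax : IsMaxOn (fun x => x ^ t * (c - x)) (Icc 0 μ) y) : y = t * max (c - y) 0 := by
  rcases le_or_gt c 0 with hc | hc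
  · have hy0 : y = 0 := by
      by_contra hy0
      have hpos : 0 < y := hy.1.lt_of_ne' hy0
      have h0 := isMaxOn_iff.1 hmax 0 ⟨le_rfl, hy.1.trans hy.2⟩
      have hneg : y ^ t * (c - y) < 0 :=
        mul_neg_of_pos_of_neg (rpow_pos_of_pos hpos t) (by linarith)
      simp only [zero_rpow ht.ne', zero_mul] at h0
      linarith
    rw [hy0, sub_zero, max_eq_right hc, mul_zero]
  · have hm : t * c / (1 + t) ∈ Icc 0 μ := by
      refine ⟨by positivity, le_trans ?_ hcμ⟩
      rw [div_le_iff₀ (by positivity)]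
      linarith
    have hym : y = t * c / (1 + t) := by
      by_contra hne
      exact (rpow_mul_sub_lt_of_ne ht hc hy.1 hne).not_ge (isMaxOn_iff.1 hmax _ hm)
    have hcy : c - y = c / (1 + t) := by rw [hym]; field_simp; ring
    rw [hcy, max_eq_left (by positivity), hym, mul_div_assoc]

end Real

theorem eq_mul_div_of_forall_eq_mul_max {ι : Type*} [Fintype ι] {μ : ℝ} (hμ : 0 < μ)
    {t d : ι → ℝ} (hd : ∀ i, d i = t i * max (μ - ∑ j, d j) 0) (i : ι) :
    d i = t i * μ / (1 + ∑ k, t k) := by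
  set D := ∑ j, d j
  have hDμ : D < μ := by
    by_contra! h
    have hD0 : D = 0 := sum_eq_zero fun j _ => by rw [hd j, max_eq_right (by linarith), mul_zero]
    linarith
  have hd' : ∀ j, d j = t j * (μ - D) := fun j => by rw [hd j, max_eq_left (by linarith)]
  have hsum : D = (∑ k, t k) * (μ - D) := by rw [sum_mul]; exact sum_congr rfl fun j _ => hd' j
  have h1S : (1 + ∑ k, t k) * (μ - D) = μ := by linarith
  have hne : 1 + ∑ k, t k ≠ 0 := by
    rintro h
    rw [h, zero_mul] at h1S
    linarith
  have hμD : μ - D = μ / (1 + ∑ k, t k) := by rw [eq_div_iff hne]; linarith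
  rw [hd' i, hμD, mul_div_assoc]

theorem stmt_2_general (n : ℕ) (μ : ℝ) (hμ : 0 < μ)
    (t : Fin n → ℝ) (ht : ∀ i, 0 < t i)
    (dNE : Fin n → ℝ) (hdNE : ∀ i, dNE i = t i * μ / (1 + ∑ k, t k)) :
    (∀ i, ∀ x ∈ Set.Icc (0 : ℝ) μ,
        x ^ t i * (μ - x - ∑ j ∈ Finset.univ.erase i, dNE j) ≤
          dNE i ^ t i * (μ - dNE i - ∑ j ∈ Finset.univ.erase i, dNE j)) ∧
    ∀ d : Fin n → ℝ, (∀ i, d i ∈ Set.Icc (0 : ℝ) μ) →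
      (∀ i, ∀ x ∈ Set.Icc (0 : ℝ) μ,
          x ^ t i * (μ - x - ∑ j ∈ Finset.univ.erase i, d j) ≤
            d i ^ t i * (μ - d i - ∑ j ∈ Finset.univ.erase i, d j)) →
      d = dNE := by
  have hS : 0 < 1 + ∑ k, t k := add_pos_of_pos_of_nonneg one_pos (sum_nonneg fun k _ => (ht k).le)
  refine ⟨fun i x hx => ?_, fun d hd hmax => funext fun i => ?_⟩
  · have hti : 0 < 1 + t i := by linarith [ht i]
    have hc : μ - ∑ j ∈ univ.erase i, dNE j = (1 + t i) * μ / (1 + ∑ k, t k) := by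
      simp only [sum_erase_eq_sub (mem_univ i), hdNE, ← sum_div, ← sum_mul]
      field_simp
      ring
    have hm : dNE i = t i * ((1 + t i) * μ / (1 + ∑ k, t k)) / (1 + t i) := by
      rw [hdNE]
      field_simp
    rw [sub_right_comm, sub_right_comm μ (dNE i), hc, hm]
    exact isMaxOn_iff.1 (Real.isMaxOn_rpow_mul_sub (ht i) (by positivity)) x hx.1
  · rw [hdNE]
    refine eq_mul_div_of_forall_eq_mul_max hμ (fun k => ?_) i
    have hresidual : μ - ∑ j ∈ univ.erase k, d j - d k = μ - ∑ j, d j := by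
      rw [sum_erase_eq_sub (mem_univ k)]
      ring
    rw [← hresidual]
    refine Real.eq_mul_max_sub_of_isMaxOn (ht k) (sub_le_self _ (sum_nonneg fun j _ => (hd j).1))
      (hd k) (isMaxOn_iff.2 fun x hx => ?_)
    simpa only [sub_right_comm] using hmax k x hx

/-- In the n-user flow control game with server capacity μ > 0 and types t_i > 0, the
profile d^{NE}(t) given by d^{NE}_i(t) = t_i μ / (1 + Σ_k t_k) is a Nash equilibrium, and
it is the unique Nash equilibrium among profiles in [0,μ]^n. -/
theorem stmt_2 (n : ℕ) (hn : 1 ≤ n) (μ : ℝ) (hμ : 0 < μ)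
    (t : Fin n → ℝ) (ht : ∀ i, 0 < t i)
    (dNE : Fin n → ℝ) (hdNE : ∀ i, dNE i = t i * μ / (1 + ∑ k, t k)) :
    (∀ i, ∀ x ∈ Set.Icc (0 : ℝ) μ,
        x ^ t i * (μ - x - ∑ j ∈ Finset.univ.erase i, dNE j) ≤
          dNE i ^ t i * (μ - dNE i - ∑ j ∈ Finset.univ.erase i, dNE j)) ∧
    ∀ d : Fin n → ℝ, (∀ i, d i ∈ Set.Icc (0 : ℝ) μ) →
      (∀ i, ∀ x ∈ Set.Icc (0 : ℝ) μ,
          x ^ t i * (μ - x - ∑ j ∈ Finset.univ.erase i, d j) ≤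
            d i ^ t i * (μ - d i - ∑ j ∈ Finset.univ.erase i, d j)) →
      d = dNE :=
  stmt_2_general n μ hμ t ht dNE hdNE
end

section
/- Consider the Bayesian flow control game with n users, server capacity μ > 0, finite type set {τ_1, …, τ_m} with τ_l > 0, and type distribution P with P(τ_l) ≥ 0 and Σ_l P(τ_l) = 1, where a strategy for user i is a map d_i : {τ_1,…,τ_m} → [0, μ]. For each i let s_i = Σ_{j≠i} Σ_{k=1}^m P(τ_k) d_j(τ_k), and assume s_i < μ for all i. Then the strategy profile (d_1,…,d_n) is a Bayesian Nash equilibrium — i.e., for every i and every l, d_i(τ_l) maximizes x ↦ x^{τ_l}(μ − x − s_i) over x ∈ [0, μ] — if and only if for every i and every l: (1 + τ_l) d_i(τ_l) + τ_l · s_i = μ τ_l. -/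
/-!
Writing `c = μ - s_i`, the payoff of type `τ_l` is `x ↦ x ^ τ_l * (c - x)`, whose derivative
`x ^ (τ_l - 1) * (τ_l c - (1 + τ_l) x)` is positive before `τ_l c / (1 + τ_l)` and negative after it.
So this point is the unique maximizer on `[0, ∞)`, and it lies in `[0, μ]` because `s_i ≥ 0`;
the equilibrium condition says exactly that `d_i(τ_l)` equals it.
-/

open Set

namespace FlowControl

variable {t c : ℝ}

theorem hasDerivAt_rpow_mul_sub {x : ℝ} (hx : 0 < x) :
    HasDerivAt (fun x => x ^ t * (c - x)) (x ^ (t - 1) * (t * c - (1 + t) * x)) x := by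
  have hpow : HasDerivAt (fun x : ℝ => x ^ t) (t * x ^ (t - 1)) x :=
    Real.hasDerivAt_rpow_const (Or.inl hx.ne')
  refine (hpow.mul ((hasDerivAt_id x).const_sub c)).congr_deriv ?_
  have hxt : x ^ t = x ^ (t - 1) * x := by
    rw [← Real.rpow_add_one hx.ne']; ring_nf
  rw [hxt, id]; ring

theorem continuous_rpow_mul_sub (ht : 0 ≤ t) : Continuous fun x : ℝ => x ^ t * (c - x) :=
  (Real.continuous_rpow_const ht).mul (continuous_const.sub continuous_id)

theorem strictMonoOn_rpow_mul_sub (ht : 0 ≤ t) :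
    StrictMonoOn (fun x => x ^ t * (c - x)) (Icc 0 (t * c / (1 + t))) := by
  refine strictMonoOn_of_deriv_pos (convex_Icc _ _) (continuous_rpow_mul_sub ht).continuousOn ?_
  intro x hx
  rw [interior_Icc] at hx
  obtain ⟨hx0, hxa⟩ := hx
  rw [(hasDerivAt_rpow_mul_sub hx0).deriv]
  rw [lt_div_iff₀ (by linarith)] at hxa
  exact mul_pos (Real.rpow_pos_of_pos hx0 _) (by linarith)

theorem strictAntiOn_rpow_mul_sub (ht : 0 ≤ t) (hc : 0 ≤ c) :
    StrictAntiOn (fun x => x ^ t * (c - x)) (Ici (t * c / (1 + t))) := by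
  refine strictAntiOn_of_deriv_neg (convex_Ici _) (continuous_rpow_mul_sub ht).continuousOn ?_
  intro x hx
  rw [interior_Ici] at hx
  have hx0 : 0 < x := lt_of_le_of_lt (by positivity) hx
  rw [(hasDerivAt_rpow_mul_sub hx0).deriv]
  rw [mem_Ioi, div_lt_iff₀ (by linarith)] at hx
  exact mul_neg_of_pos_of_neg (Real.rpow_pos_of_pos hx0 _) (by linarith)

theorem rpow_mul_sub_lt_of_ne (ht : 0 ≤ t) (hc : 0 ≤ c) {x : ℝ} (hx : 0 ≤ x)
    (hne : x ≠ t * c / (1 + t)) :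
    x ^ t * (c - x) < (t * c / (1 + t)) ^ t * (c - t * c / (1 + t)) := by
  have ha : 0 ≤ t * c / (1 + t) := by positivity
  rcases hne.lt_or_gt with hlt | hgt
  · exact strictMonoOn_rpow_mul_sub ht ⟨hx, hlt.le⟩ ⟨ha, le_rfl⟩ hlt
  · exact strictAntiOn_rpow_mul_sub ht hc (mem_Ici.2 le_rfl) hgt.le hgt

theorem isMaxOn_rpow_mul_sub_iff (ht : 0 ≤ t) (hc : 0 ≤ c) {b d : ℝ} (hd : 0 ≤ d)
    (hb : t * c / (1 + t) ≤ b) :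
    IsMaxOn (fun x => x ^ t * (c - x)) (Icc 0 b) d ↔ d = t * c / (1 + t) := by
  rw [isMaxOn_iff]
  constructor
  · intro hmax
    by_contra hne
    exact (hmax _ ⟨by positivity, hb⟩).not_gt (rpow_mul_sub_lt_of_ne ht hc hd hne)
  · rintro rfl x hx
    rcases eq_or_ne x (t * c / (1 + t)) with rfl | hne
    · exact le_rfl
    · exact (rpow_mul_sub_lt_of_ne ht hc hx.1 hne).le

end FlowControl

open FlowControl

theorem stmt_4_general (n m : ℕ) (μ : ℝ)
    (τ : Fin m → ℝ) (hτ : ∀ l, 0 < τ l)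
    (P : Fin m → ℝ) (hP : ∀ l, 0 ≤ P l)
    (d : Fin n → Fin m → ℝ) (hd : ∀ i l, d i l ∈ Set.Icc (0 : ℝ) μ)
    (s : Fin n → ℝ)
    (hs : ∀ i, s i = ∑ j ∈ Finset.univ.erase i, ∑ k, P k * d j k)
    (hsμ : ∀ i, s i < μ) :
    (∀ i l, ∀ x ∈ Set.Icc (0 : ℝ) μ,
        x ^ τ l * (μ - x - s i) ≤ d i l ^ τ l * (μ - d i l - s i)) ↔
    (∀ i l, (1 + τ l) * d i l + τ l * s i = μ * τ l) := by
  have hs0 : ∀ i, 0 ≤ s i := fun i => (hs i).symm ▸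
    Finset.sum_nonneg fun j _ => Finset.sum_nonneg fun k _ => mul_nonneg (hP k) (hd j k).1
  refine forall₂_congr fun i l => ?_
  have ht : 0 ≤ τ l := (hτ l).le
  have h1t : 0 < 1 + τ l := by linarith
  have hb : τ l * (μ - s i) / (1 + τ l) ≤ μ := by
    rw [div_le_iff₀ h1t]; nlinarith [mul_nonneg ht (hs0 i), hs0 i, hsμ i]
  simp only [sub_right_comm μ _ (s i)]
  rw [← isMaxOn_iff (f := fun x => x ^ τ l * (μ - s i - x)),
    isMaxOn_rpow_mul_sub_iff ht (by linarith [hsμ i]) (hd i l).1 hb, eq_div_iff h1t.ne']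
  constructor <;> intro h <;> linarith

/-- In the Bayesian flow control game, a strategy profile is a Bayesian Nash equilibrium
if and only if it satisfies the first-order conditions
(1 + τ_l) d_i(τ_l) + τ_l s_i = μ τ_l for all i and l. -/
theorem stmt_4 (n m : ℕ) (μ : ℝ) (hμ : 0 < μ)
    (τ : Fin m → ℝ) (hτ : ∀ l, 0 < τ l)
    (P : Fin m → ℝ) (hP : ∀ l, 0 ≤ P l) (hPsum : ∑ l, P l = 1)
    (d : Fin n → Fin m → ℝ) (hd : ∀ i l, d i l ∈ Set.Icc (0 : ℝ) μ)
    (s : Fin n → ℝ)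
    (hs : ∀ i, s i = ∑ j ∈ Finset.univ.erase i, ∑ k, P k * d j k)
    (hsμ : ∀ i, s i < μ) :
    (∀ i l, ∀ x ∈ Set.Icc (0 : ℝ) μ,
        x ^ τ l * (μ - x - s i) ≤ d i l ^ τ l * (μ - d i l - s i)) ↔
    (∀ i l, (1 + τ l) * d i l + τ l * s i = μ * τ l) :=
  stmt_4_general n m μ τ hτ P hP d hd s hs hsμ
end

section
/- Let n ≥ 1, let τ_1, …, τ_m > 0, let P(τ_1), …, P(τ_m) > 0 with Σ_l P(τ_l) = 1, let Λ = diag(1+τ_1, …, 1+τ_m), τ the column vector (τ_1,…,τ_m)^T, P the row vector (P(τ_1),…,P(τ_m)), s = Σ_l P(τ_l) τ_l/(1+τ_l), β = 1/(s−1), and γ = n/(1+(n−1)s). Let A be the (nm)×(nm) real matrix indexed by pairs (i,l) ∈ {1,…,n}×{1,…,m} with entry A[(i,l),(j,k)] equal to (1+τ_l) if i=j and l=k, equal to 0 if i=j and l≠k, and equal to τ_l P(τ_k) if i≠j. Set B = Λ^{-1} − β Λ^{-1} τ P Λ^{-1} and C = B · (I − γ τ P Λ^{-1}) · (τ P) ·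 B, and let M be the (nm)×(nm) matrix with M[(i,l),(j,k)] = B[l,k]·[i=j] − C[l,k]. Then A · M = I, i.e., M is the inverse of A. -/
/-!
Write `T = τ P` and `J` for the all-ones `n × n` matrix. Then `A = I ⊗ (Λ - T) + J ⊗ T` and
`M = I ⊗ B - J ⊗ C`, and since `J² = n J` the product `A M` lies in the span of `I ⊗ X` and
`J ⊗ Y`. Its `I`-part is `(Λ - T) B`, which is `I` because `B` is the Sherman–Morrison inverse of
the rank-one perturbation `Λ - τ P` (here `P Λ⁻¹ τ = s ≠ 1`). Its `J`-part vanishes because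
`T Λ⁻¹ T = s T` makes `C` a multiple of `Λ⁻¹ T Λ⁻¹`, and `γ` is exactly the scalar that balances it.
-/

open Matrix Kronecker

section ShermanMorrison

variable {R 𝒜 : Type*} [CommRing R] [Ring 𝒜] [Algebra R 𝒜] {l d t b c : 𝒜} {s β γ k : R}

/- Think of `d = l⁻¹` and of `t` as a rank-one element with `t d t = s t`; then
`b = d - β d t d` is the Sherman–Morrison inverse of `l - t`, and `c` is the correction term
of the block inverse. -/

theorem mul_shermanMorrison (ht : t * d * t = s • t) (hβ : β * (s - 1) = 1)
    (hb : b = d - β • (d * t * d)) : t * b = (-β) • (t * d) := by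
  have htdtd : t * (d * t * d) = s • (t * d) := by
    rw [← mul_assoc, ← mul_assoc, ht, smul_mul_assoc]
  rw [hb, mul_sub, mul_smul_comm, htdtd]
  linear_combination (norm := module) -(hβ • (t * d))

theorem shermanMorrison_mul (ht : t * d * t = s • t) (hβ : β * (s - 1) = 1)
    (hb : b = d - β • (d * t * d)) : b * t = (-β) • (d * t) := by
  have hdtdt : d * t * d * t = s • (d * t) := by
    rw [mul_assoc d t d, mul_assoc d, ht, mul_smul_comm]
  rw [hb, sub_mul, smul_mul_assoc, hdtdt]
  linear_combination (norm := module) -(hβ • (d * t))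

theorem sub_mul_shermanMorrison (hl : l * d = 1) (ht : t * d * t = s • t)
    (hβ : β * (s - 1) = 1) (hb : b = d - β • (d * t * d)) : (l - t) * b = 1 := by
  have hlb : l * b = 1 - β • (t * d) := by
    rw [hb, mul_sub, mul_smul_comm, ← mul_assoc, ← mul_assoc, hl, one_mul]
  rw [sub_mul, hlb, mul_shermanMorrison ht hβ hb, neg_smul, sub_neg_eq_add, sub_add_cancel]

theorem correction_eq (ht : t * d * t = s • t) (hβ : β * (s - 1) = 1)
    (hb : b = d - β • (d * t * d)) (hc : c = b * (1 - γ • (t * d)) * t * b) :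
    c = ((1 - γ * s) * β ^ 2) • (d * t * d) := by
  have hmid : (1 - γ • (t * d)) * t = (1 - γ * s) • t := by
    rw [sub_mul, one_mul, smul_mul_assoc, ht, smul_smul, sub_smul, one_smul]
  rw [hc, mul_assoc b, hmid, mul_smul_comm, shermanMorrison_mul ht hβ hb, smul_mul_assoc,
    smul_mul_assoc, mul_assoc d t b, mul_shermanMorrison ht hβ hb, mul_smul_comm, ← mul_assoc]
  module

theorem sub_mul_correction_add_smul (hl : l * d = 1) (ht : t * d * t = s • t)
    (hβ : β * (s - 1) = 1) (hγ : γ * (1 + (k - 1) * s) = k)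
    (hb : b = d - β • (d * t * d)) (hc : c = b * (1 - γ • (t * d)) * t * b) :
    (l - t) * c + k • (t * c) = t * b := by
  have hldtd : l * (d * t * d) = t * d := by rw [← mul_assoc, ← mul_assoc, hl, one_mul]
  have htdtd : t * (d * t * d) = s • (t * d) := by
    rw [← mul_assoc, ← mul_assoc, ht, smul_mul_assoc]
  rw [mul_shermanMorrison ht hβ hb, correction_eq ht hβ hb hc]
  simp only [sub_mul, mul_smul_comm, hldtd, htdtd]
  linear_combination (norm := module) ((-s * β ^ 2) * hγ + (-β) * hβ) • (t * d)

end ShermanMorrison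

theorem vecMulVec_mul_mul_vecMulVec {R ι : Type*} [CommSemiring R] [Fintype ι] (u v : ι → R)
    (D : Matrix ι ι R) : vecMulVec u v * D * vecMulVec u v = (v ⬝ᵥ D *ᵥ u) • vecMulVec u v := by
  rw [mul_assoc, mul_vecMulVec, vecMulVec_mul_vecMulVec, vecMulVec_smul]

theorem one_kronecker_add_ones_kronecker_mul_eq_one {R n m : Type*} [CommRing R]
    [Fintype n] [DecidableEq n] [Fintype m] [DecidableEq m] {E T B C : Matrix m m R}
    (hB : E * B = 1) (hC : E * C + (Fintype.card n : R) • (T * C) = T * B) :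
    (1 ⊗ₖ E + (of fun _ _ => 1 : Matrix n n R) ⊗ₖ T) *
      (1 ⊗ₖ B - (of fun _ _ => 1 : Matrix n n R) ⊗ₖ C) = 1 := by
  have hJ : (of fun _ _ => 1 : Matrix n n R) * of (fun _ _ => 1) =
      (Fintype.card n : R) • of fun _ _ => 1 := by
    ext i j
    simp [mul_apply]
  rw [add_mul, mul_sub, mul_sub, ← mul_kronecker_mul, ← mul_kronecker_mul, ← mul_kronecker_mul,
    ← mul_kronecker_mul, hJ, one_mul, mul_one, one_mul, hB, one_kronecker_one, ← hC,
    kronecker_add, smul_kronecker, kronecker_smul]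
  abel

theorem weighted_sum_div_one_add_lt_one {ι : Type*} [Fintype ι] {w x : ι → ℝ}
    (hw : ∀ i, 0 < w i) (hx : ∀ i, 0 ≤ x i) (hw1 : ∑ i, w i = 1) :
    ∑ i, w i * (x i / (1 + x i)) < 1 := by
  have hne : (Finset.univ : Finset ι).Nonempty := by
    by_contra h
    simp [Finset.not_nonempty_iff_eq_empty.mp h] at hw1
  calc ∑ i, w i * (x i / (1 + x i)) < ∑ i, w i := by
        refine Finset.sum_lt_sum_of_nonempty hne fun i _ => ?_
        have : x i / (1 + x i) < 1 := (div_lt_one (by linarith [hx i])).mpr (by linarith)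
        nlinarith [hw i]
    _ = 1 := hw1

/-- The block matrix A of the first-order conditions of the Bayesian flow control game
has inverse M given blockwise by M[(i,l),(j,k)] = B[l,k]·[i=j] − C[l,k], where
B = Λ^{-1} − β Λ^{-1} τ P Λ^{-1} and C = B (I − γ τPΛ^{-1}) (τP) B. -/
theorem stmt_7 (n m : ℕ) (hn : 1 ≤ n) (τ P : Fin m → ℝ)
    (hτ : ∀ l, 0 < τ l) (hP : ∀ l, 0 < P l) (hPsum : ∑ l, P l = 1)
    (s β γ : ℝ) (hs : s = ∑ l, P l * (τ l / (1 + τ l)))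
    (hβ : β = 1 / (s - 1)) (hγ : γ = (n : ℝ) / (1 + ((n : ℝ) - 1) * s))
    (Λinv tP B C : Matrix (Fin m) (Fin m) ℝ)
    (hΛinv : Λinv = Matrix.diagonal fun l => (1 + τ l)⁻¹)
    (htP : tP = Matrix.of fun l k => τ l * P k)
    (hB : B = Λinv - β • (Λinv * tP * Λinv))
    (hC : C = B * (1 - γ • (tP * Λinv)) * tP * B)
    (A M : Matrix (Fin n × Fin m) (Fin n × Fin m) ℝ)
    (hA : A = Matrix.of fun p q =>
        if p.1 = q.1 then (if p.2 = q.2 then 1 + τ p.2 else 0) else τ p.2 * P q.2)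
    (hM : M = Matrix.of fun p q =>
        (if p.1 = q.1 then B p.2 q.2 else 0) - C p.2 q.2) :
    A * M = 1 := by
  have hs0 : 0 ≤ s := hs ▸ Finset.sum_nonneg fun l _ =>
    mul_nonneg (hP l).le (div_nonneg (hτ l).le (by linarith [hτ l]))
  have hs1 : s < 1 := hs ▸ weighted_sum_div_one_add_lt_one hP (fun l => (hτ l).le) hPsum
  have hβ' : β * (s - 1) = 1 := by rw [hβ]; field_simp [(sub_neg.mpr hs1).ne]
  have hγ' : γ * (1 + ((Fintype.card (Fin n) : ℝ) - 1) * s) = Fintype.card (Fin n) := by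
    have : 0 < 1 + ((n : ℝ) - 1) * s := by
      nlinarith [show (1 : ℝ) ≤ n by exact_mod_cast hn]
    rw [Fintype.card_fin, hγ]; field_simp
  set Λ : Matrix (Fin m) (Fin m) ℝ := diagonal fun l => 1 + τ l
  have hΛ : Λ * Λinv = 1 := by
    rw [hΛinv, diagonal_mul_diagonal, ← diagonal_one]
    exact congrArg diagonal (funext fun l => mul_inv_cancel₀ (by linarith [hτ l]))
  have hT : tP * Λinv * tP = s • tP := by
    rw [show tP = vecMulVec τ P from htP, vecMulVec_mul_mul_vecMulVec, hs, hΛinv]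
    simp [dotProduct, mulVec_diagonal, div_eq_inv_mul]
  have hA' : A = 1 ⊗ₖ (Λ - tP) + (of fun _ _ => 1 : Matrix (Fin n) (Fin n) ℝ) ⊗ₖ tP := by
    ext ⟨i, l⟩ ⟨j, k⟩
    by_cases hij : i = j <;> by_cases hlk : l = k <;> simp [hA, htP, Λ, one_apply, hij, hlk]
  have hM' : M = 1 ⊗ₖ B - (of fun _ _ => 1 : Matrix (Fin n) (Fin n) ℝ) ⊗ₖ C := by
    ext ⟨i, l⟩ ⟨j, k⟩
    by_cases hij : i = j <;> simp [hM, one_apply, hij]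
  rw [hA', hM']
  exact one_kronecker_add_ones_kronecker_mul_eq_one (sub_mul_shermanMorrison hΛ hT hβ' hB)
    (sub_mul_correction_add_smul hΛ hT hβ' hγ' hB hC)
end

section
/- Let n ≥ 1, μ > 0, let τ_1, …, τ_m > 0 with τ_l ≤ n for all l, and let P(τ_1), …, P(τ_m) > 0 with Σ_l P(τ_l) = 1. Then the function f(d) = − ln(μ − Σ_{i=1}^n d_i) − Σ_{i=1}^n ln( Σ_{l=1}^m P(τ_l) d_i^{τ_l/n} ) is convex on the convex open set { d ∈ ℝ^n : d_i > 0 for all i and Σ_{i=1}^n d_i < μ }. -/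
/-!
Each term of `f` is convex on the domain: `μ - ∑ i, d i` is affine, and for `τ_l / n ∈ [0, 1]`
the map `d ↦ ∑ l, P l * d i ^ (τ l / n)` is a nonnegative combination of concave powers, hence
concave and (as `P` is a probability vector) positive. The logarithm of a positive concave
function is concave, so `f` is a sum of convex functions.
-/

open Finset Real

section Sum

variable {𝕜 E β ι : Type*} [Semiring 𝕜] [PartialOrder 𝕜] [AddCommMonoid E] [SMul 𝕜 E]
  [AddCommMonoid β] [PartialOrder β] [IsOrderedAddMonoid β] [Module 𝕜 β] {s : Set E}

theorem ConvexOn.sum (hs : Convex 𝕜 s) {t : Finset ι} {f : ι → E → β}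
    (hf : ∀ i ∈ t, ConvexOn 𝕜 s (f i)) : ConvexOn 𝕜 s fun x => ∑ i ∈ t, f i x := by
  classical
  induction t using Finset.induction_on with
  | empty => simpa using convexOn_const (0 : β) hs
  | insert a t ha ih =>
    simp only [Finset.sum_insert ha]
    exact (hf a (mem_insert_self a t)).add (ih fun i hi => hf i (mem_insert_of_mem hi))

theorem ConcaveOn.sum (hs : Convex 𝕜 s) {t : Finset ι} {f : ι → E → β}
    (hf : ∀ i ∈ t, ConcaveOn 𝕜 s (f i)) : ConcaveOn 𝕜 s fun x => ∑ i ∈ t, f i x :=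
  ConvexOn.sum (β := βᵒᵈ) hs hf

end Sum

theorem ConcaveOn.log {E : Type*} [AddCommMonoid E] [SMul ℝ E] {s : Set E} {g : E → ℝ}
    (hg : ConcaveOn ℝ s g) (hpos : ∀ x ∈ s, 0 < g x) : ConcaveOn ℝ s fun x => Real.log (g x) := by
  refine ⟨hg.1, fun x hx y hy a b ha hb hab => ?_⟩
  have hgx := hpos x hx
  have hgy := hpos y hy
  calc a • Real.log (g x) + b • Real.log (g y) ≤ Real.log (a • g x + b • g y) :=
        strictConcaveOn_log_Ioi.concaveOn.2 hgx hgy ha hb hab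
    _ ≤ Real.log (g (a • x + b • y)) :=
        log_le_log (convex_Ioi (0 : ℝ) hgx hgy ha hb hab) (hg.2 hx hy ha hb hab)

theorem convex_setOf_pos_and_sum_lt {ι : Type*} [Fintype ι] (μ : ℝ) :
    Convex ℝ {d : ι → ℝ | (∀ i, 0 < d i) ∧ ∑ i, d i < μ} := by
  have hpos : Convex ℝ {d : ι → ℝ | ∀ i, 0 < d i} := fun x hx y hy a b ha hb hab i =>
    convex_Ioi (0 : ℝ) (hx i) (hy i) ha hb hab
  have hsum : Convex ℝ {d : ι → ℝ | ∑ i, d i < μ} :=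
    convex_halfSpace_lt
      ⟨fun _ _ => sum_add_distrib, fun c x => (smul_sum (s := univ) (r := c) (f := x)).symm⟩ μ
  exact hpos.inter hsum

theorem concaveOn_sum_mul_rpow_apply {ι κ : Type*} {s : Set (ι → ℝ)} (hs : Convex ℝ s)
    (hs₀ : ∀ d ∈ s, ∀ i, 0 ≤ d i) (i : ι) (t : Finset κ) {P p : κ → ℝ}
    (hP : ∀ l ∈ t, 0 ≤ P l) (hp₀ : ∀ l ∈ t, 0 ≤ p l) (hp₁ : ∀ l ∈ t, p l ≤ 1) :
    ConcaveOn ℝ s fun d => ∑ l ∈ t, P l * d i ^ p l := by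
  refine ConcaveOn.sum hs fun l hl => ?_
  have hpow := (concaveOn_rpow (hp₀ l hl) (hp₁ l hl)).comp_linearMap
    (LinearMap.proj (R := ℝ) (φ := fun _ : ι => ℝ) i)
  exact (hpow.subset (fun d hd => hs₀ d hd i) hs).smul (hP l hl)

theorem stmt_9_general (n m : ℕ) (μ : ℝ)
    (τ : Fin m → ℝ) (hτ : ∀ l, 0 < τ l) (hτn : ∀ l, τ l ≤ (n : ℝ))
    (P : Fin m → ℝ) (hP : ∀ l, 0 < P l) (hPsum : ∑ l, P l = 1) :
    ConvexOn ℝ {d : Fin n → ℝ | (∀ i, 0 < d i) ∧ ∑ i, d i < μ}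
      (fun d => - Real.log (μ - ∑ i, d i)
        - ∑ i, Real.log (∑ l, P l * d i ^ (τ l / (n : ℝ)))) := by
  set S := {d : Fin n → ℝ | (∀ i, 0 < d i) ∧ ∑ i, d i < μ}
  have hS : Convex ℝ S := convex_setOf_pos_and_sum_lt μ
  have hslack : ConcaveOn ℝ S fun d => μ - ∑ i, d i :=
    (concaveOn_const μ hS).sub (ConvexOn.sum hS fun i _ => (LinearMap.proj i).convexOn hS)
  have htypes : (univ : Finset (Fin m)).Nonempty := nonempty_of_sum_ne_zero (hPsum ▸ one_ne_zero)
  have hexp₀ : ∀ l ∈ univ, 0 ≤ τ l / n := fun l _ => div_nonneg (hτ l).le n.cast_nonneg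
  have hexp₁ : ∀ l ∈ univ, τ l / n ≤ 1 := fun l _ => div_le_one_of_le₀ (hτn l) n.cast_nonneg
  have hmix : ∀ i, ConcaveOn ℝ S fun d => Real.log (∑ l, P l * d i ^ (τ l / (n : ℝ))) := by
    intro i
    refine ConcaveOn.log (concaveOn_sum_mul_rpow_apply hS (fun d hd i => (hd.1 i).le) i
      univ (fun l _ => (hP l).le) hexp₀ hexp₁) fun d hd => ?_
    exact sum_pos (fun l _ => mul_pos (hP l) (rpow_pos_of_pos (hd.1 i) _)) htypes
  exact (hslack.log fun d hd => sub_pos.2 hd.2).neg.sub (ConcaveOn.sum hS fun i _ => hmix i)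

/-- The negative log of the manager's expected a-priori utility,
f(d) = − ln(μ − Σ_i d_i) − Σ_i ln( Σ_l P(τ_l) d_i^{τ_l/n} ), is convex on the set
{ d : d_i > 0 for all i and Σ_i d_i < μ }, provided τ_l ≤ n for all l. -/
theorem stmt_9 (n m : ℕ) (hn : 1 ≤ n) (μ : ℝ) (hμ : 0 < μ)
    (τ : Fin m → ℝ) (hτ : ∀ l, 0 < τ l) (hτn : ∀ l, τ l ≤ (n : ℝ))
    (P : Fin m → ℝ) (hP : ∀ l, 0 < P l) (hPsum : ∑ l, P l = 1) :
    ConvexOn ℝ {d : Fin n → ℝ | (∀ i, 0 < d i) ∧ ∑ i, d i < μ}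
      (fun d => - Real.log (μ - ∑ i, d i)
        - ∑ i, Real.log (∑ l, P l * d i ^ (τ l / (n : ℝ)))) :=
  stmt_9_general n m μ τ hτ hτn P hP hPsum
end

section
/- Let n ≥ 1, μ > 0, and t_i > 0 for all i. Let d̃ ∈ ℝ^n satisfy d̃_i > 0 and d̃_i ≤ d^{NE}_i(t) = t_i μ / (1 + Σ_{k=1}^n t_k) for all i. Let c_i ≥ ( t_i (μ − Σ_{k=1}^n d̃_k) − d̃_i ) / d̃_i for all i and let d₀^M ≥ c_i ( t_i (μ − Σ_{k=1}^n d̃_k) − d̃_i ) / (1 + t_i(1 + c_i)) for all i. Define the affine intervention rule f(d) = min{ max{ Σ_{k=1}^n c_k (d_k − d̃_k), 0 }, d₀^M }. Then f(d̃) = 0, and d̃ is a Nash equilibrium of the intervened game: for every i and every x ∈ [0, μ], d̃_i^{t_i} (μ − Σ_{k=1}^n d̃_k) ≥ x^{t_i} ( μ − x − Σ_{k≠i} d̃_k − f(x, d̃_{-i}) ), where (x, d̃_{-i}) is the profile obtained from d̃ by replacing d̃_i with x. -/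
/-!
Fix a user `i` and write `R = μ - ∑_{k ≠ i} d̃_k` for the capacity the others leave it. Its payoff
for a rate `x` is `x ^ t_i * (R - x - f)`, and each of the three regimes of the intervention
(none for `x ≤ d̃_i`, the linear part, the cap `d₀^M`) makes this `x ^ t_i * (K - L x)` for suitable
`K`, `L`. Such a function increases up to `t_i K / ((1 + t_i) L)` and decreases afterwards. The bound on
`d̃_i` puts it on the increasing side of the regime `x ≤ d̃_i`, the bound on `c_i` puts it on the
decreasing side of the linear regime, and the bound on `d₀^M` puts the point `d̃_i + d₀^M / c_i`
where the cap starts on the decreasing side of the capped regime.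
-/

open Set Finset

section RpowMulAffine

variable {a K L m : ℝ}

theorem hasDerivAt_rpow_mul_sub_mul (a K L : ℝ) {x : ℝ} (hx : 0 < x) :
    HasDerivAt (fun y : ℝ => y ^ a * (K - L * y))
      (x ^ (a - 1) * (a * K - (1 + a) * L * x)) x := by
  have hlin : HasDerivAt (fun y : ℝ => K - L * y) (-L) x := by
    simpa using ((hasDerivAt_id x).const_mul L).const_sub K
  refine ((Real.hasDerivAt_rpow_const (p := a) (Or.inl hx.ne')).mul hlin).congr_deriv ?_
  rw [Real.rpow_sub_one hx.ne']
  field_simp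
  ring

theorem continuous_rpow_mul_sub_mul (ha : 0 ≤ a) :
    Continuous (fun y : ℝ => y ^ a * (K - L * y)) :=
  (Real.continuous_rpow_const ha).mul (by fun_prop)

theorem monotoneOn_rpow_mul_sub_mul (ha : 0 ≤ a) (hL : 0 ≤ L)
    (hm : (1 + a) * L * m ≤ a * K) :
    MonotoneOn (fun y : ℝ => y ^ a * (K - L * y)) (Icc 0 m) := by
  refine monotoneOn_of_deriv_nonneg (convex_Icc 0 m)
    (continuous_rpow_mul_sub_mul ha).continuousOn ?_ ?_ <;> rw [interior_Icc]
  · exact fun x hx => (hasDerivAt_rpow_mul_sub_mul a K L hx.1).differentiableAt.differentiableWithinAt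
  · intro x hx
    rw [(hasDerivAt_rpow_mul_sub_mul a K L hx.1).deriv]
    have : (1 + a) * L * x ≤ (1 + a) * L * m := by gcongr; exact hx.2.le
    exact mul_nonneg (Real.rpow_nonneg hx.1.le _) (by linarith)

theorem antitoneOn_rpow_mul_sub_mul (ha : 0 ≤ a) (hL : 0 ≤ L) (hm₀ : 0 ≤ m)
    (hm : a * K ≤ (1 + a) * L * m) :
    AntitoneOn (fun y : ℝ => y ^ a * (K - L * y)) (Ici m) := by
  refine antitoneOn_of_deriv_nonpos (convex_Ici m)
    (continuous_rpow_mul_sub_mul ha).continuousOn ?_ ?_ <;> rw [interior_Ici]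
  · exact fun x hx =>
      (hasDerivAt_rpow_mul_sub_mul a K L (hm₀.trans_lt hx)).differentiableAt.differentiableWithinAt
  · intro x hx
    rw [(hasDerivAt_rpow_mul_sub_mul a K L (hm₀.trans_lt hx)).deriv]
    have : (1 + a) * L * m ≤ (1 + a) * L * x := by gcongr; exact le_of_lt hx
    exact mul_nonpos_of_nonneg_of_nonpos (Real.rpow_nonneg (hm₀.trans hx.le) _) (by linarith)

end RpowMulAffine

section SingleUser

variable {a R d c D x : ℝ}

theorem one_add_mul_one_add_pos (ha : 0 ≤ a) (hc : 0 ≤ c) : 0 < 1 + a * (1 + c) := by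
  nlinarith

theorem slope_nonneg {A : ℝ} (hd : 0 < d) (hA : 0 ≤ A) (hc : A / d ≤ c) : 0 ≤ c :=
  (div_nonneg hA hd.le).trans hc

theorem cap_nonneg {A : ℝ} (ha : 0 ≤ a) (hA : 0 ≤ A) (hc : 0 ≤ c)
    (hD : c * A / (1 + a * (1 + c)) ≤ D) : 0 ≤ D :=
  (div_nonneg (mul_nonneg hc hA) (one_add_mul_one_add_pos ha hc).le).trans hD

theorem rpow_mul_sub_le_of_le (ha : 0 ≤ a) (hE : d ≤ a * (R - d)) (hx₀ : 0 ≤ x) (hx : x ≤ d) :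
    x ^ a * (R - x) ≤ d ^ a * (R - d) := by
  have hmono := monotoneOn_rpow_mul_sub_mul (K := R) (L := 1) (m := d) ha zero_le_one
    (by linarith)
  simpa using hmono ⟨hx₀, hx⟩ ⟨hx₀.trans hx, le_rfl⟩ hx

theorem rpow_mul_sub_sub_slope_le (ha : 0 ≤ a) (hd : 0 ≤ d) (hc₀ : 0 ≤ c)
    (hc : a * (R - d) - d ≤ c * d) (hx : d ≤ x) :
    x ^ a * (R - x - c * (x - d)) ≤ d ^ a * (R - d) := by
  have hanti := antitoneOn_rpow_mul_sub_mul (K := R + c * d) (L := 1 + c) ha (by linarith) hd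
    (by nlinarith)
  calc x ^ a * (R - x - c * (x - d)) = x ^ a * (R + c * d - (1 + c) * x) := by ring
    _ ≤ d ^ a * (R + c * d - (1 + c) * d) := hanti self_mem_Ici hx hx
    _ = d ^ a * (R - d) := by ring

theorem rpow_mul_sub_sub_cap_le (ha : 0 ≤ a) (hd : 0 ≤ d) (hc₀ : 0 ≤ c) (hD₀ : 0 ≤ D)
    (hc : a * (R - d) - d ≤ c * d) (hD : c * (a * (R - d) - d) ≤ D * (1 + a * (1 + c)))
    (hx : D < c * (x - d)) :
    x ^ a * (R - x - D) ≤ d ^ a * (R - d) := by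
  have hcpos : 0 < c := hc₀.lt_of_ne (by rintro rfl; linarith)
  set x₀ := d + D / c with hx₀_def
  have hcx₀ : c * (x₀ - d) = D := by rw [hx₀_def]; field_simp; ring
  have hdx₀ : d ≤ x₀ := le_add_of_nonneg_right (div_nonneg hD₀ hcpos.le)
  have hx₀x : x₀ ≤ x := by
    have : D / c < x - d := (div_lt_iff₀ hcpos).2 (by linarith)
    linarith
  have hthreshold : a * (R - D) ≤ (1 + a) * 1 * x₀ := by
    refine le_of_mul_le_mul_left ?_ hcpos
    nlinarith
  have hanti := antitoneOn_rpow_mul_sub_mul (K := R - D) ha zero_le_one (hd.trans hdx₀) hthreshold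
  calc x ^ a * (R - x - D) = x ^ a * (R - D - 1 * x) := by ring
    _ ≤ x₀ ^ a * (R - D - 1 * x₀) := hanti self_mem_Ici hx₀x hx₀x
    _ = x₀ ^ a * (R - x₀ - c * (x₀ - d)) := by rw [hcx₀]; ring
    _ ≤ d ^ a * (R - d) := rpow_mul_sub_sub_slope_le ha hd hc₀ hc hdx₀

theorem rpow_mul_sub_sub_intervention_le (ha : 0 < a) (hd : 0 < d) (hE : d ≤ a * (R - d))
    (hc : (a * (R - d) - d) / d ≤ c)
    (hD : c * (a * (R - d) - d) / (1 + a * (1 + c)) ≤ D) (hx₀ : 0 ≤ x) :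
    x ^ a * (R - x - min (max (c * (x - d)) 0) D) ≤ d ^ a * (R - d) := by
  have hc₀ := slope_nonneg hd (sub_nonneg.2 hE) hc
  have hD₀ := cap_nonneg ha.le (sub_nonneg.2 hE) hc₀ hD
  have hc' : a * (R - d) - d ≤ c * d := by rwa [div_le_iff₀ hd] at hc
  have hD' : c * (a * (R - d) - d) ≤ D * (1 + a * (1 + c)) := by
    rwa [div_le_iff₀ (one_add_mul_one_add_pos ha.le hc₀)] at hD
  rcases le_total x d with hxd | hdx
  · rw [max_eq_right (mul_nonpos_of_nonneg_of_nonpos hc₀ (sub_nonpos.2 hxd)), min_eq_left hD₀,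
      sub_zero]
    exact rpow_mul_sub_le_of_le ha.le hE hx₀ hxd
  rw [max_eq_left (mul_nonneg hc₀ (sub_nonneg.2 hdx))]
  rcases le_or_gt (c * (x - d)) D with hlin | hcap
  · rw [min_eq_left hlin]
    exact rpow_mul_sub_sub_slope_le ha.le hd.le hc₀ hc' hdx
  · rw [min_eq_right hcap.le]
    exact rpow_mul_sub_sub_cap_le ha.le hd.le hc₀ hD₀ hc' hD' hcap

end SingleUser

theorem le_mul_sub_sum_of_le_div {ι : Type*} [Fintype ι] (μ : ℝ) {t d : ι → ℝ}
    (ht : ∀ i, 0 ≤ t i) (hd : ∀ i, d i ≤ t i * μ / (1 + ∑ k, t k)) (i : ι) :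
    d i ≤ t i * (μ - ∑ k, d k) := by
  have hT : 0 < 1 + ∑ k, t k := by linarith [Finset.sum_nonneg (s := Finset.univ) fun k _ => ht k]
  have hsum : ∑ k, d k ≤ (∑ k, t k) * μ / (1 + ∑ k, t k) := by
    rw [sum_mul, sum_div]
    exact sum_le_sum fun k _ => hd k
  have hμ : μ / (1 + ∑ k, t k) ≤ μ - ∑ k, d k := by
    have : μ - (∑ k, t k) * μ / (1 + ∑ k, t k) = μ / (1 + ∑ k, t k) := by field_simp; ring
    linarith
  calc d i ≤ t i * (μ / (1 + ∑ k, t k)) := by rw [← mul_div_assoc]; exact hd i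
    _ ≤ t i * (μ - ∑ k, d k) := mul_le_mul_of_nonneg_left hμ (ht i)

theorem sum_mul_update_sub {ι : Type*} [Fintype ι] [DecidableEq ι] (c d : ι → ℝ) (i : ι)
    (x : ℝ) : ∑ k, c k * (Function.update d i x k - d k) = c i * (x - d i) := by
  rw [Fintype.sum_eq_single i fun k hk => by simp [Function.update_of_ne hk]]
  simp

theorem stmt_10_general (n : ℕ) (hn : 1 ≤ n) (μ : ℝ)
    (t : Fin n → ℝ) (ht : ∀ i, 0 < t i)
    (dt : Fin n → ℝ) (hdtpos : ∀ i, 0 < dt i)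
    (hdtNE : ∀ i, dt i ≤ t i * μ / (1 + ∑ k, t k))
    (c : Fin n → ℝ)
    (hc : ∀ i, (t i * (μ - ∑ k, dt k) - dt i) / dt i ≤ c i)
    (d0M : ℝ)
    (hd0M : ∀ i, c i * (t i * (μ - ∑ k, dt k) - dt i) / (1 + t i * (1 + c i)) ≤ d0M)
    (f : (Fin n → ℝ) → ℝ)
    (hf : ∀ d, f d = min (max (∑ k, c k * (d k - dt k)) 0) d0M) :
    f dt = 0 ∧
    ∀ i, ∀ x ∈ Set.Icc (0 : ℝ) μ,
      x ^ t i * (μ - x - (∑ k ∈ Finset.univ.erase i, dt k) - f (Function.update dt i x)) ≤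
        dt i ^ t i * (μ - ∑ k, dt k) := by
  have hE := le_mul_sub_sum_of_le_div μ (fun i => (ht i).le) hdtNE
  constructor
  · let i₀ : Fin n := ⟨0, hn⟩
    have hA₀ := sub_nonneg.2 (hE i₀)
    have hd0M₀ := cap_nonneg (ht i₀).le hA₀ (slope_nonneg (hdtpos i₀) hA₀ (hc i₀)) (hd0M i₀)
    simp [hf, hd0M₀]
  · intro i x hx
    have hR : μ - ∑ k, dt k = μ - ∑ k ∈ univ.erase i, dt k - dt i := by
      rw [sum_erase_eq_sub (mem_univ i)]; ring
    rw [hf, sum_mul_update_sub, sub_right_comm μ x, hR]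
    rw [hR] at hE hc hd0M
    exact rpow_mul_sub_sub_intervention_le (ht i) (hdtpos i) (hE i) (hc i) (hd0M i) hx.1

/-- If d̃ is a positive profile bounded above by the no-intervention Nash equilibrium,
the slopes c_i are large enough and the intervention capacity d₀^M is large enough, then
the affine intervention rule f(d) = min{max{Σ_k c_k (d_k − d̃_k), 0}, d₀^M} sustains d̃
without intervention: f(d̃) = 0 and d̃ is a Nash equilibrium of the intervened game. -/
theorem stmt_10 (n : ℕ) (hn : 1 ≤ n) (μ : ℝ) (hμ : 0 < μ)
    (t : Fin n → ℝ) (ht : ∀ i, 0 < t i)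
    (dt : Fin n → ℝ) (hdtpos : ∀ i, 0 < dt i)
    (hdtNE : ∀ i, dt i ≤ t i * μ / (1 + ∑ k, t k))
    (c : Fin n → ℝ)
    (hc : ∀ i, (t i * (μ - ∑ k, dt k) - dt i) / dt i ≤ c i)
    (d0M : ℝ)
    (hd0M : ∀ i, c i * (t i * (μ - ∑ k, dt k) - dt i) / (1 + t i * (1 + c i)) ≤ d0M)
    (f : (Fin n → ℝ) → ℝ)
    (hf : ∀ d, f d = min (max (∑ k, c k * (d k - dt k)) 0) d0M) :
    f dt = 0 ∧
    ∀ i, ∀ x ∈ Set.Icc (0 : ℝ) μ,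
      x ^ t i * (μ - x - (∑ k ∈ Finset.univ.erase i, dt k) - f (Function.update dt i x)) ≤
        dt i ^ t i * (μ - ∑ k, dt k) :=
  stmt_10_general n hn μ t ht dt hdtpos hdtNE c hc d0M hd0M f hf
end

section
/- Let a > 0 and τ > 0 and define f(x) = ((a + τx)/(a + τ))^{τ+1} · x^{−τ} for x > 0. Then f(1) = 1; f is differentiable on (0, ∞) with f'(x) = τ x^{−τ−1} ((a + τx)/(a + τ))^{τ} (x − a)/(a + τ); f is strictly decreasing on (0, a] and strictly increasing on [a, ∞). -/
open Real Set

noncomputable def misreportRatio (a τ x : ℝ) : ℝ := ((a + τ * x) / (a + τ)) ^ (τ + 1) * x ^ (-τ)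

section

variable {a τ : ℝ}

theorem misreportRatio_one (h : a + τ ≠ 0) : misreportRatio a τ 1 = 1 := by
  simp [misreportRatio, div_self h]

theorem hasDerivAt_misreportRatio {x : ℝ} (hx : 0 < x) (hu : 0 < (a + τ * x) / (a + τ)) :
    HasDerivAt (misreportRatio a τ)
      (τ * x ^ (-τ - 1) * ((a + τ * x) / (a + τ)) ^ τ * ((x - a) / (a + τ))) x := by
  have haτ : a + τ ≠ 0 := by
    rintro h
    simp [h] at hu
  have hlin : HasDerivAt (fun x : ℝ => (a + τ * x) / (a + τ)) (τ / (a + τ)) x := by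
    simpa using (((hasDerivAt_id x).const_mul τ).const_add a).div_const (a + τ)
  have hprod : HasDerivAt (misreportRatio a τ) _ x :=
    (hlin.rpow_const (p := τ + 1) (Or.inl hu.ne')).mul
      (hasDerivAt_rpow_const (p := -τ) (Or.inl hx.ne'))
  convert hprod using 1
  have hxτ : x ^ (-τ) = x ^ (-τ - 1) * x := by rw [← rpow_add_one hx.ne', sub_add_cancel]
  rw [add_sub_cancel_right, rpow_add hu, rpow_one, hxτ]
  field_simp
  ring

theorem misreportRatio_deriv_div_sub_pos {x : ℝ} (hx : 0 < x) (hu : 0 < (a + τ * x) / (a + τ))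
    (hτ : 0 < τ) (haτ : 0 < a + τ) :
    0 < τ * x ^ (-τ - 1) * ((a + τ * x) / (a + τ)) ^ τ / (a + τ) := by
  have := rpow_pos_of_pos hu τ
  have := rpow_pos_of_pos hx (-τ - 1)
  positivity

end

/-- For a > 0 and τ > 0, the function f(x) = ((a + τx)/(a + τ))^{τ+1} x^{−τ} on (0,∞)
satisfies f(1) = 1, has derivative f'(x) = τ x^{−τ−1} ((a + τx)/(a + τ))^{τ} (x − a)/(a + τ),
is strictly decreasing on (0, a] and strictly increasing on [a, ∞). -/
theorem stmt_13 (a τ : ℝ) (ha : 0 < a) (hτ : 0 < τ)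
    (f : ℝ → ℝ) (hf : ∀ x, f x = ((a + τ * x) / (a + τ)) ^ (τ + 1) * x ^ (-τ)) :
    f 1 = 1 ∧
    (∀ x : ℝ, 0 < x →
      HasDerivAt f
        (τ * x ^ (-τ - 1) * ((a + τ * x) / (a + τ)) ^ τ * ((x - a) / (a + τ))) x) ∧
    StrictAntiOn f (Set.Ioc 0 a) ∧
    StrictMonoOn f (Set.Ici a) := by
  obtain rfl : f = misreportRatio a τ := funext hf
  have haτ : 0 < a + τ := by linarith
  have hu : ∀ x, 0 < x → 0 < (a + τ * x) / (a + τ) := fun x hx => by positivity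
  have hderiv : ∀ x, 0 < x → HasDerivAt (misreportRatio a τ)
      (τ * x ^ (-τ - 1) * ((a + τ * x) / (a + τ)) ^ τ * ((x - a) / (a + τ))) x :=
    fun x hx => hasDerivAt_misreportRatio hx (hu x hx)
  have hderiv_eq : ∀ x, 0 < x → deriv (misreportRatio a τ) x =
      τ * x ^ (-τ - 1) * ((a + τ * x) / (a + τ)) ^ τ / (a + τ) * (x - a) := fun x hx => by
    rw [(hderiv x hx).deriv]; ring
  have hcont : ∀ s ⊆ Ioi 0, ContinuousOn (misreportRatio a τ) s := fun s hs x hx =>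
    (hderiv x (hs hx)).continuousAt.continuousWithinAt
  refine ⟨misreportRatio_one haτ.ne', hderiv, ?_, ?_⟩
  · refine strictAntiOn_of_deriv_neg (convex_Ioc 0 a) (hcont _ Ioc_subset_Ioi_self) ?_
    rw [interior_Ioc]
    rintro x ⟨hx, hxa⟩
    rw [hderiv_eq x hx]
    exact mul_neg_of_pos_of_neg
      (misreportRatio_deriv_div_sub_pos hx (hu x hx) hτ haτ) (sub_neg.mpr hxa)
  · refine strictMonoOn_of_deriv_pos (convex_Ici a) (hcont _ (Ici_subset_Ioi.mpr ha)) ?_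
    rw [interior_Ici]
    intro x (hax : a < x)
    have hx : 0 < x := ha.trans hax
    rw [hderiv_eq x hx]
    exact mul_pos (misreportRatio_deriv_div_sub_pos hx (hu x hx) hτ haτ) (sub_pos.mpr hax)
end

section
/- Let a ≥ 1 and τ > 0 and define f(x) = ((a + τx)/(a + τ))^{τ+1} · x^{−τ} for x > 0. Then f(x) ≥ 1 for every x with 0 < x ≤ 1. -/
/-!
Weighted AM–GM with weights `a/(a+τ)` and `τ/(a+τ)` on `1` and `x` gives
`x ^ (τ/(a+τ)) ≤ (a+τx)/(a+τ)`. Raising to the power `τ+1`, the left side becomes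
`x ^ (τ(τ+1)/(a+τ))`, and since `a ≥ 1` this exponent is at most `τ`, so for `0 < x ≤ 1`
the left side is at least `x ^ τ`.
-/

open Real

lemma rpow_div_add_le_weighted_mean {a τ x : ℝ} (ha : 0 ≤ a) (hτ : 0 ≤ τ) (haτ : 0 < a + τ)
    (hx : 0 ≤ x) : x ^ (τ / (a + τ)) ≤ (a + τ * x) / (a + τ) := by
  have amgm := geom_mean_le_arith_mean2_weighted (p₁ := 1) (p₂ := x)
    (div_nonneg ha haτ.le) (div_nonneg hτ haτ.le) zero_le_one hx (by field_simp)
  rw [one_rpow, one_mul] at amgm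
  calc x ^ (τ / (a + τ)) ≤ a / (a + τ) * 1 + τ / (a + τ) * x := amgm
    _ = (a + τ * x) / (a + τ) := by field_simp

lemma rpow_le_weighted_mean_rpow {a τ x : ℝ} (ha : 1 ≤ a) (hτ : 0 ≤ τ) (hx : 0 < x)
    (hx1 : x ≤ 1) : x ^ τ ≤ ((a + τ * x) / (a + τ)) ^ (τ + 1) := by
  have haτ : 0 < a + τ := by linarith
  have hexp : τ / (a + τ) * (τ + 1) ≤ τ := by
    rw [div_mul_eq_mul_div, div_le_iff₀ haτ]
    nlinarith
  calc x ^ τ ≤ x ^ (τ / (a + τ) * (τ + 1)) := rpow_le_rpow_of_exponent_ge hx hx1 hexp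
    _ = (x ^ (τ / (a + τ))) ^ (τ + 1) := rpow_mul hx.le _ _
    _ ≤ ((a + τ * x) / (a + τ)) ^ (τ + 1) :=
      rpow_le_rpow (by positivity)
        (rpow_div_add_le_weighted_mean (by linarith) hτ haτ hx.le) (by linarith)

/-- For a ≥ 1 and τ > 0, the function f(x) = ((a + τx)/(a + τ))^{τ+1} x^{−τ} satisfies
f(x) ≥ 1 for every x with 0 < x ≤ 1: a user never gains by under-reporting its type. -/
theorem stmt_14 (a τ : ℝ) (ha : 1 ≤ a) (hτ : 0 < τ) :
    ∀ x : ℝ, 0 < x → x ≤ 1 →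
      1 ≤ ((a + τ * x) / (a + τ)) ^ (τ + 1) * x ^ (-τ) := by
  intro x hx hx1
  rw [rpow_neg hx.le, ← div_eq_mul_inv, one_le_div (rpow_pos_of_pos hx τ)]
  exact rpow_le_weighted_mean_rpow ha hτ.le hx hx1
end

section
/- Let a > 1 and τ > 0 and define f(x) = ((a + τx)/(a + τ))^{τ+1} · x^{−τ} for x > 0. If x₀ > 1 and f(x₀) ≥ 1, then f(x) ≥ 1 for every x ≥ x₀. -/
/-!
Write `f = exp ∘ g` with `g x = (τ + 1) log ((a + τx)/(a + τ)) - τ log x`. Then `g 1 = 0` and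
`g' x = τ (x - a) / (x (a + τx))`, so `g` strictly decreases on `(0, a]` and increases on
`[a, ∞)`. Since `g x₀ ≥ 0 = g 1` with `x₀ > 1`, the point `x₀` cannot lie in the
decreasing branch, so `x₀ ≥ a` and `g` stays nonnegative to the right of `x₀`.
-/

open Real Set

theorem StrictAntiOn.apply_le_of_monotoneOn_Ici {α β : Type*} [LinearOrder α] [Preorder β]
    {g : α → β} {a b x₀ x : α} (hanti : StrictAntiOn g (Icc b a))
    (hmono : MonotoneOn g (Ici a)) (hbx₀ : b < x₀) (hgx₀ : g b ≤ g x₀) (hx : x₀ ≤ x) :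
    g b ≤ g x := by
  have hax₀ : a ≤ x₀ := by
    by_contra! hx₀a
    have := hanti ⟨le_rfl, hbx₀.le.trans hx₀a.le⟩ ⟨hbx₀.le, hx₀a.le⟩ hbx₀
    exact this.not_ge hgx₀
  exact hgx₀.trans (hmono hax₀ (hax₀.trans hx) hx)

noncomputable def logGain (a τ x : ℝ) : ℝ :=
  (τ + 1) * log ((a + τ * x) / (a + τ)) - τ * log x

section logGain

variable {a τ x : ℝ}

@[simp]
theorem logGain_one (a τ : ℝ) : logGain a τ 1 = 0 := by
  simp [logGain]

theorem one_le_rpow_mul_rpow_neg_iff (ha : 0 < a) (hτ : 0 ≤ τ) (hx : 0 < x) :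
    1 ≤ ((a + τ * x) / (a + τ)) ^ (τ + 1) * x ^ (-τ) ↔ 0 ≤ logGain a τ x := by
  have hbase : 0 < (a + τ * x) / (a + τ) := by positivity
  rw [rpow_def_of_pos hbase, rpow_def_of_pos hx, ← exp_add, one_le_exp_iff, logGain]
  ring_nf

theorem hasDerivAt_logGain (ha : 0 < a) (hτ : 0 ≤ τ) (hx : 0 < x) :
    HasDerivAt (logGain a τ) (τ * (x - a) / (x * (a + τ * x))) x := by
  have hlin : HasDerivAt (fun y => (a + τ * y) / (a + τ)) (τ / (a + τ)) x := by
    simpa using (((hasDerivAt_id x).const_mul τ).const_add a).div_const (a + τ)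
  have hbase : (a + τ * x) / (a + τ) ≠ 0 := by positivity
  have hsum : HasDerivAt (logGain a τ)
      ((τ + 1) * ((τ / (a + τ)) / ((a + τ * x) / (a + τ))) - τ * x⁻¹) x :=
    ((hlin.log hbase).const_mul (τ + 1)).sub ((hasDerivAt_log hx.ne').const_mul τ)
  convert hsum using 1
  have : a + τ * x ≠ 0 := by positivity
  have : a + τ ≠ 0 := by positivity
  field_simp
  ring

theorem strictAntiOn_logGain (ha : 0 < a) (hτ : 0 < τ) :
    StrictAntiOn (logGain a τ) (Ioc 0 a) := by
  refine strictAntiOn_of_hasDerivWithinAt_neg (convex_Ioc 0 a)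
    (f' := fun y => τ * (y - a) / (y * (a + τ * y)))
    (HasDerivAt.continuousOn fun y hy => hasDerivAt_logGain ha hτ.le hy.1) ?_ ?_
  · rw [interior_Ioc]
    exact fun y hy => (hasDerivAt_logGain ha hτ.le hy.1).hasDerivWithinAt
  · rw [interior_Ioc]
    intro y ⟨hy0, hya⟩
    have : 0 < y * (a + τ * y) := by positivity
    exact div_neg_of_neg_of_pos (mul_neg_of_pos_of_neg hτ (by linarith)) this

theorem strictMonoOn_logGain (ha : 0 < a) (hτ : 0 < τ) :
    StrictMonoOn (logGain a τ) (Ici a) := by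
  refine strictMonoOn_of_hasDerivWithinAt_pos (convex_Ici a)
    (f' := fun y => τ * (y - a) / (y * (a + τ * y)))
    (HasDerivAt.continuousOn fun y hy => hasDerivAt_logGain ha hτ.le (ha.trans_le hy)) ?_ ?_
  · rw [interior_Ici]
    exact fun y hy => (hasDerivAt_logGain ha hτ.le (ha.trans hy)).hasDerivWithinAt
  · rw [interior_Ici]
    intro y (hya : a < y)
    have : 0 < y - a := by linarith
    have : 0 < y := ha.trans hya
    positivity

end logGain

/-- For a > 1 and τ > 0 and f(x) = ((a + τx)/(a + τ))^{τ+1} x^{−τ}: if x₀ > 1 and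
f(x₀) ≥ 1, then f(x) ≥ 1 for every x ≥ x₀. -/
theorem stmt_15 (a τ : ℝ) (ha : 1 < a) (hτ : 0 < τ)
    (f : ℝ → ℝ) (hf : ∀ x, f x = ((a + τ * x) / (a + τ)) ^ (τ + 1) * x ^ (-τ))
    (x₀ : ℝ) (hx₀ : 1 < x₀) (hfx₀ : 1 ≤ f x₀) :
    ∀ x : ℝ, x₀ ≤ x → 1 ≤ f x := by
  intro x hx
  have ha₀ : 0 < a := one_pos.trans ha
  have hanti : StrictAntiOn (logGain a τ) (Icc 1 a) :=
    (strictAntiOn_logGain ha₀ hτ).mono fun y hy => ⟨one_pos.trans_le hy.1, hy.2⟩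
  rw [hf, one_le_rpow_mul_rpow_neg_iff ha₀ hτ.le (by linarith)]
  rw [hf, one_le_rpow_mul_rpow_neg_iff ha₀ hτ.le (by linarith)] at hfx₀
  simpa using hanti.apply_le_of_monotoneOn_Ici (strictMonoOn_logGain ha₀ hτ).monotoneOn hx₀
    (by rwa [logGain_one]) hx
end

section
/- Let a > 1 and τ > 0 and define f(x) = ((a + τx)/(a + τ))^{τ+1} · x^{−τ} for x > 0. Then f(x) < 1 for every x with 1 < x < a. -/
/-! The base `(a + τx)/(a + τ)` lies strictly below the weighted harmonic mean `(τ + 1)x/(τ + x)`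
of `x` (weight `τ`) and `1` (weight `1`), because the difference of the two cross products is
`τ(x - 1)(x - a) < 0`. By the harmonic–geometric mean inequality that harmonic mean is at most the
geometric mean `x^{τ/(τ+1)}`, and raising to the power `τ + 1` gives
`((a + τx)/(a + τ))^{τ+1} < x^τ`. -/

open Real

lemma div_lt_harmonic_mean {a τ x : ℝ} (hτ : 0 < τ) (hx : 1 < x) (hxa : x < a) :
    (a + τ * x) / (a + τ) < (τ + 1) * x / (τ + x) := by
  rw [div_lt_div_iff₀ (by linarith) (by linarith)]
  nlinarith [mul_pos hτ (mul_pos (sub_pos.mpr hxa) (sub_pos.mpr hx))]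

lemma harmonic_mean_le_rpow {τ x : ℝ} (hτ : 0 ≤ τ) (hx : 0 < x) :
    (τ + 1) * x / (τ + x) ≤ x ^ (τ / (τ + 1)) := by
  have hτ1 : 0 < τ + 1 := by linarith
  have hgm := geom_mean_le_arith_mean2_weighted (div_nonneg hτ hτ1.le)
    (div_nonneg zero_le_one hτ1.le) (inv_pos.mpr hx).le zero_le_one
    (by field_simp : τ / (τ + 1) + 1 / (τ + 1) = 1)
  rw [one_rpow, mul_one, inv_rpow hx.le, mul_one,
    (by field_simp : τ / (τ + 1) * x⁻¹ + 1 / (τ + 1) = ((τ + 1) * x / (τ + x))⁻¹)] at hgm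
  exact (inv_le_inv₀ (by positivity) (by positivity)).mp hgm

theorem stmt_16_general (a τ : ℝ) (hτ : 0 < τ) :
    ∀ x : ℝ, 1 < x → x < a →
      ((a + τ * x) / (a + τ)) ^ (τ + 1) * x ^ (-τ) < 1 := by
  intro x hx1 hxa
  have hx : 0 < x := by linarith
  have hbase : 0 ≤ (a + τ * x) / (a + τ) := div_nonneg (by nlinarith) (by linarith)
  have hpow : ((a + τ * x) / (a + τ)) ^ (τ + 1) < x ^ τ :=
    calc ((a + τ * x) / (a + τ)) ^ (τ + 1)
        < (x ^ (τ / (τ + 1))) ^ (τ + 1) :=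
          rpow_lt_rpow hbase ((div_lt_harmonic_mean hτ hx1 hxa).trans_le
            (harmonic_mean_le_rpow hτ.le hx)) (by linarith)
      _ = x ^ τ := by rw [← rpow_mul hx.le, div_mul_cancel₀ τ (by linarith)]
  rwa [rpow_neg hx.le, mul_inv_lt_iff₀ (rpow_pos_of_pos hx τ), one_mul]

/-- For a > 1 and τ > 0, the function f(x) = ((a + τx)/(a + τ))^{τ+1} x^{−τ} satisfies
f(x) < 1 for every x with 1 < x < a: a user always strictly gains by slightly
over-reporting its type. -/
theorem stmt_16 (a τ : ℝ) (ha : 1 < a) (hτ : 0 < τ) :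
    ∀ x : ℝ, 1 < x → x < a →
      ((a + τ * x) / (a + τ)) ^ (τ + 1) * x ^ (-τ) < 1 :=
  stmt_16_general a τ hτ
end

section
/- Let n ≥ 1, μ > 0, and let T = {τ_1, …, τ_m} with 0 < τ_1 < τ_2 < … < τ_m. For a true type τ ∈ T, a reported type τ̂ ∈ T, and other users' types (t_j)_{j≠i} ∈ T^{n−1} with S = Σ_{j≠i} t_j, define the honest-allocation payoff W(τ, τ̂, S) = ( τ̂ μ / (n + S + τ̂) )^{τ} · ( μ − τ̂ μ / (n + S + τ̂) − Σ_{j≠i} t_j μ / (n + S + τ̂) ). Suppose that for every l ∈ {1, …, m−1} and every S that is a sum of n−1 elements of T: ( (n + S + τ_{l+1}) / (n + S + τ_l) )^{τ_l + 1} · ( τ_l / τ_{l+1} )^{τ_l} ≥ 1. Then for every τ, τ̂ ∈ T and every (t_j)_{j≠i} ∈ T^{n−1}: W(τ, τ, S) ≥ W(τ, τ̂, S); i.e., truthfully reporting one's type maximizes the payoff under the socially optimal allocation. -/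
/-!
Writing `N = n + S`, the payoff of a user of true type `c` reporting `x` is
`μ ^ c * (n * μ) * exp (c log x - (c + 1) log (N + x))`, so only the potential
`F x = c log x - (c + 1) log (N + x)` matters. Its derivative `c / x - (c + 1) / (N + x)` is
nonnegative for `x ≤ c N`, so since `N ≥ 1` under-reporting never helps. For over-reporting, the
hypothesis on consecutive types `x < y` (both `≥ c`) is exactly `F y ≤ F x` with `c` replaced by
`x`, and lowering the weight from `x` to `c` only helps because `x (N + y) ≤ y (N + x)`;
chaining these steps upward from `c` gives `F ≤ F c` above `c`.
-/

open Real Set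

lemma Fin.le_of_succ_le_of_le {α : Type*} [Preorder α] {m : ℕ} (f : Fin m → α) (b : Fin m)
    (hf : ∀ (l : ℕ) (hl : l + 1 < m), (b : ℕ) ≤ l → f ⟨l + 1, hl⟩ ≤ f ⟨l, by omega⟩)
    (a : Fin m) (hba : b ≤ a) : f a ≤ f b := by
  suffices ∀ k (hk : k < m), (b : ℕ) ≤ k → f ⟨k, hk⟩ ≤ f b from this a a.isLt hba
  intro k hk hbk
  induction k, hbk using Nat.le_induction with
  | base => rfl
  | succ k hbk ih => exact (hf k hk hbk).trans (ih (by omega))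

namespace FlowControl

noncomputable def payoff (n μ S c x : ℝ) : ℝ :=
  (x * μ / (n + S + x)) ^ c * (μ - x * μ / (n + S + x) - S * μ / (n + S + x))

noncomputable def reportPotential (N c x : ℝ) : ℝ :=
  c * log x - (c + 1) * log (N + x)

lemma payoff_eq_exp {n μ S x : ℝ} (c : ℝ) (hn : 0 < n) (hμ : 0 < μ) (hS : 0 ≤ S) (hx : 0 < x) :
    payoff n μ S c x = exp (c * log μ + log (n * μ) + reportPotential (n + S) c x) := by
  have hNx : 0 < n + S + x := by positivity
  have hshare : μ - x * μ / (n + S + x) - S * μ / (n + S + x) = n * μ / (n + S + x) := by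
    field_simp
    ring
  rw [payoff, hshare, rpow_def_of_pos (by positivity),
    ← exp_log (by positivity : 0 < n * μ / (n + S + x)), ← exp_add,
    log_div (by positivity) hNx.ne', log_div (by positivity) hNx.ne',
    log_mul hx.ne' hμ.ne', reportPotential]
  congr 1
  ring

lemma payoff_le_payoff {n μ S x y : ℝ} (c : ℝ) (hn : 0 < n) (hμ : 0 < μ) (hS : 0 ≤ S)
    (hx : 0 < x) (hy : 0 < y) (h : reportPotential (n + S) c x ≤ reportPotential (n + S) c y) :
    payoff n μ S c x ≤ payoff n μ S c y := by
  rw [payoff_eq_exp c hn hμ hS hx, payoff_eq_exp c hn hμ hS hy]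
  gcongr

lemma hasDerivAt_reportPotential {N z : ℝ} (c : ℝ) (hz : 0 < z) (hNz : 0 < N + z) :
    HasDerivAt (reportPotential N c) (c / z - (c + 1) / (N + z)) z := by
  have hlog : HasDerivAt (fun y => log (N + y)) (1 / (N + z)) z :=
    ((hasDerivAt_id' z).const_add N).log hNz.ne'
  have h : HasDerivAt (reportPotential N c) (c * z⁻¹ - (c + 1) * (1 / (N + z))) z :=
    ((hasDerivAt_log hz.ne').const_mul c).sub (hlog.const_mul (c + 1))
  simpa only [div_eq_mul_inv, one_mul] using h

lemma reportPotential_monotoneOn {N : ℝ} (c : ℝ) (hN : 0 ≤ N) :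
    MonotoneOn (reportPotential N c) (Ioc 0 (c * N)) := by
  have hderiv : ∀ z ∈ Ioc 0 (c * N),
      HasDerivAt (reportPotential N c) (c / z - (c + 1) / (N + z)) z :=
    fun z hz => hasDerivAt_reportPotential c hz.1 (by linarith [hz.1])
  refine monotoneOn_of_hasDerivWithinAt_nonneg (convex_Ioc 0 (c * N))
    (fun z hz => (hderiv z hz).continuousAt.continuousWithinAt)
    (fun z hz => (hderiv z (interior_subset hz)).hasDerivWithinAt) fun z hz => ?_
  rw [interior_Ioc] at hz
  have hNz : 0 < N + z := by linarith [hz.1]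
  rw [sub_nonneg, div_le_div_iff₀ hNz hz.1]
  nlinarith [hz.2]

lemma reportPotential_le_of_consecutive {N c x y : ℝ} (hN : 0 ≤ N) (hcx : c ≤ x) (hx : 0 < x)
    (hxy : x ≤ y) (h : 1 ≤ ((N + y) / (N + x)) ^ (x + 1) * (x / y) ^ x) :
    reportPotential N c y ≤ reportPotential N c x := by
  have hy : 0 < y := hx.trans_le hxy
  have hNx : 0 < N + x := by linarith
  have hNy : 0 < N + y := by linarith
  set A := log ((N + y) / (N + x))
  set B := log (x / y)
  have hweighted : 0 ≤ (x + 1) * A + x * B := by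
    have := log_le_log one_pos h
    rwa [log_one, log_mul (by positivity) (by positivity), log_rpow (by positivity),
      log_rpow (by positivity)] at this
  have hsum : A + B ≤ 0 := by
    rw [← log_mul (by positivity) (by positivity)]
    refine log_nonpos (by positivity) ?_
    rw [div_mul_div_comm, div_le_one (by positivity)]
    nlinarith
  have hdiff : reportPotential N c x - reportPotential N c y = (c + 1) * A + c * B := by
    simp only [reportPotential, A, B]
    rw [log_div hNy.ne' hNx.ne', log_div hx.ne' hy.ne']
    ring
  nlinarith [mul_nonneg (sub_nonneg.2 hcx) (neg_nonneg.2 hsum)]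

end FlowControl

open FlowControl in
/-- In the flow control game with type set T = {τ_1 < … < τ_m}, if for every pair of
consecutive types and every possible sum S of n−1 types the incentive-compatibility
condition ((n+S+τ_{l+1})/(n+S+τ_l))^{τ_l+1} (τ_l/τ_{l+1})^{τ_l} ≥ 1 holds, then
truthfully reporting one's type maximizes the payoff W under the socially optimal
allocation. -/
theorem stmt_17 (n m : ℕ) (hn : 1 ≤ n) (μ : ℝ) (hμ : 0 < μ)
    (τ : Fin m → ℝ) (hτpos : ∀ l, 0 < τ l) (hτmono : StrictMono τ)
    (W : ℝ → ℝ → ℝ → ℝ)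
    (hW : ∀ a b S, W a b S =
      (b * μ / ((n : ℝ) + S + b)) ^ a *
        (μ - b * μ / ((n : ℝ) + S + b) - S * μ / ((n : ℝ) + S + b)))
    (hyp : ∀ (l : ℕ) (hl : l + 1 < m) (u : Fin (n - 1) → Fin m),
      1 ≤ (((n : ℝ) + (∑ j, τ (u j)) + τ ⟨l + 1, hl⟩) /
            ((n : ℝ) + (∑ j, τ (u j)) + τ ⟨l, by omega⟩)) ^ (τ ⟨l, by omega⟩ + 1) *
          (τ ⟨l, by omega⟩ / τ ⟨l + 1, hl⟩) ^ (τ ⟨l, by omega⟩)) :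
    ∀ (a b : Fin m) (u : Fin (n - 1) → Fin m),
      W (τ b) (τ a) (∑ j, τ (u j)) ≤ W (τ b) (τ b) (∑ j, τ (u j)) := by
  intro a b u
  set S := ∑ j, τ (u j)
  have hS : 0 ≤ S := Finset.sum_nonneg fun j _ => (hτpos (u j)).le
  have hn' : (1 : ℝ) ≤ n := by exact_mod_cast hn
  rw [hW, hW]
  refine payoff_le_payoff _ (by linarith) hμ hS (hτpos a) (hτpos b) ?_
  rcases le_total a b with hab | hba
  · have hb : τ b ≤ τ b * (n + S) := le_mul_of_one_le_right (hτpos b).le (by linarith)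
    exact reportPotential_monotoneOn _ (by linarith) ⟨hτpos a, (hτmono.monotone hab).trans hb⟩
      ⟨hτpos b, hb⟩ (hτmono.monotone hab)
  · refine Fin.le_of_succ_le_of_le (fun k => reportPotential (n + S) (τ b) (τ k)) b
      (fun l hl hbl => ?_) a hba
    exact reportPotential_le_of_consecutive (by linarith)
      (hτmono.monotone (show b ≤ ⟨l, by omega⟩ from hbl)) (hτpos _)
      (hτmono.monotone (Fin.mk_le_mk.mpr l.le_succ)) (hyp l hl u)
end
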